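/- arXiv:2307.10309 — 11 statements merged into one kernel-verified Lean document; each statement's English description precedes it below -/
import Mathlib

section
/- Let R be a commutative ring, S a multiplicative subset, and s ∈ S. If every countably generated submodule of an R-module M is S-finite with respect to the fixed element s (i.e., for each countably generated submodule N there is a finitely generated K ⊆ N with s•N ⊆ K), and S is anti-Archimedean (⋂_{n≥1} sⁿR ∩ S ≠ ∅), then there exists t ∈ S such that every submodule of M is S-finite with respect to t; hence M is uniformly S-Noetherian. -/
theorem stmt2 {R M : Type*} [CommRing R] [AddCommGroup M] [Module R M]
    (S : Submonoid R) (s : R) (hs : s ∈ S)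
    (hAA : ∃ t ∈ S, ∀ n : ℕ, 1 ≤ n → s ^ n ∣ t)
    (h : ∀ N : Submodule R M, (∃ T : Set M, T.Countable ∧ Submodule.span R T = N) →
      ∃ K : Submodule R M, K ≤ N ∧ K.FG ∧ ∀ x ∈ N, s • x ∈ K) :
    ∃ t ∈ S, ∀ N : Submodule R M,
      ∃ K : Submodule R M, K ≤ N ∧ K.FG ∧ ∀ x ∈ N, t • x ∈ K := by
  classical
  obtain ⟨t, htS, ht⟩ := hAA
  refine ⟨t, htS, fun N => ?_⟩
  by_contra hcon
  push_neg at hcon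
  choose K hKle hKfg hKs using h
  choose x hxN hxK using hcon
  -- step: add a bad element
  set P : Set M → Prop := fun T => T.Countable ∧ Submodule.span R T ≤ N with hP
  let step : {T : Set M // P T} → {T : Set M // P T} := fun p =>
    ⟨p.1 ∪ {x (K (Submodule.span R p.1) ⟨p.1, p.2.1, rfl⟩)
        (le_trans (hKle _ _) p.2.2) (hKfg _ _)},
     p.2.1.union (Set.countable_singleton _),
     by
       rw [Submodule.span_union]
       exact sup_le p.2.2 ((Submodule.span_singleton_le_iff_mem _ _).2 (hxN _ _ _))⟩
  let f : ℕ → {T : Set M // P T} := fun n => step^[n] ⟨∅, Set.countable_empty, by simp⟩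
  have hstep : ∀ n, f (n + 1) = step (f n) := fun n =>
    Function.iterate_succ_apply' step n _
  have mono : Monotone fun n => Submodule.span R (f n).1 := by
    apply monotone_nat_of_le_succ
    intro n
    rw [hstep n]
    exact Submodule.span_mono Set.subset_union_left
  have hUc : (⋃ n, (f n).1).Countable := Set.countable_iUnion fun n => (f n).2.1
  set C : Submodule R M := Submodule.span R (⋃ n, (f n).1) with hC
  have hCprf : ∃ T : Set M, T.Countable ∧ Submodule.span R T = C := ⟨_, hUc, rfl⟩
  have hCiSup : C = ⨆ n, Submodule.span R (f n).1 := Submodule.span_iUnion _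
  obtain ⟨G, hG⟩ := hKfg C hCprf
  have hgn : ∀ g ∈ G, ∃ n, (g : M) ∈ Submodule.span R (f n).1 := by
    intro g hg
    have hgK : (g : M) ∈ K C hCprf := hG ▸ Submodule.subset_span hg
    have : (g : M) ∈ C := hKle C hCprf hgK
    rw [hCiSup] at this
    exact (Submodule.mem_iSup_of_directed _ (mono.directed_le)).1 this
  choose! idx hidx using hgn
  set n₀ := G.sup idx with hn₀
  have hK'n : K C hCprf ≤ Submodule.span R (f n₀).1 := by
    rw [← hG, Submodule.span_le]
    intro g hg
    exact mono (Finset.le_sup hg) (hidx g hg)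
  -- the bad element at stage n₀
  set prf : ∃ T : Set M, T.Countable ∧ Submodule.span R T = Submodule.span R (f n₀).1 :=
    ⟨(f n₀).1, (f n₀).2.1, rfl⟩ with hprf
  set xn := x (K (Submodule.span R (f n₀).1) prf)
      (le_trans (hKle _ _) (f n₀).2.2) (hKfg _ _) with hxn
  have hxnC : xn ∈ C := by
    apply Submodule.subset_span
    apply Set.mem_iUnion.2 ⟨n₀ + 1, ?_⟩
    rw [hstep n₀]
    exact Set.mem_union_right _ rfl
  have h1 : s • xn ∈ Submodule.span R (f n₀).1 := hK'n (hKs C hCprf xn hxnC)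
  have h2 : s • (s • xn) ∈ K (Submodule.span R (f n₀).1) prf :=
    hKs _ prf _ h1
  obtain ⟨c, hc2⟩ := ht 2 (by norm_num)
  have h3 : t • xn = c • (s • (s • xn)) := by
    rw [smul_smul, smul_smul, hc2]
    ring_nf
  exact hxK _ (le_trans (hKle _ _) (f n₀).2.2) (hKfg _ _)
    (h3 ▸ Submodule.smul_mem _ c h2)
end

section
/- Let R be a commutative ring and S a multiplicative subset satisfying the maximal multiple condition, i.e., there exists s ∈ S such that t divides s for every t ∈ S. Then an R-module M is uniformly S-Noetherian if and only if M is S-Noetherian. -/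
theorem stmt3 {R M : Type*} [CommRing R] [AddCommGroup M] [Module R M]
    (S : Submonoid R) (hmax : ∃ s ∈ S, ∀ t ∈ S, t ∣ s) :
    (∃ s ∈ S, ∀ N : Submodule R M,
        ∃ K : Submodule R M, K ≤ N ∧ K.FG ∧ ∀ x ∈ N, s • x ∈ K) ↔
    (∀ N : Submodule R M,
        ∃ s ∈ S, ∃ K : Submodule R M, K ≤ N ∧ K.FG ∧ ∀ x ∈ N, s • x ∈ K) := by
  constructor
  · rintro ⟨s, hs, h⟩ N
    exact ⟨s, hs, h N⟩
  · rintro h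
    obtain ⟨s, hs, hdvd⟩ := hmax
    refine ⟨s, hs, fun N => ?_⟩
    obtain ⟨t, ht, K, hKN, hKfg, hK⟩ := h N
    obtain ⟨c, hc⟩ := hdvd t ht
    refine ⟨K, hKN, hKfg, fun x hx => ?_⟩
    have : s • x = c • (t • x) := by rw [hc, smul_smul, mul_comm]
    rw [this]
    exact K.smul_mem c (hK x hx)
end

section
/- Let R be a commutative ring, S a multiplicative subset, and S* = { r ∈ R : there exist s₁, s₂ ∈ S with s₁ = r·s₂ } its saturation. Then an R-module M is S-Noetherian if and only if M is S*-Noetherian. -/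
theorem stmt4 {R M : Type*} [CommRing R] [AddCommGroup M] [Module R M]
    (S : Submonoid R) :
    (∀ N : Submodule R M,
        ∃ s ∈ S, ∃ K : Submodule R M, K ≤ N ∧ K.FG ∧ ∀ x ∈ N, s • x ∈ K) ↔
    (∀ N : Submodule R M,
        ∃ r : R, (∃ s₁ ∈ S, ∃ s₂ ∈ S, (s₁ : R) = r * s₂) ∧
          ∃ K : Submodule R M, K ≤ N ∧ K.FG ∧ ∀ x ∈ N, r • x ∈ K) := by
  constructor
  · intro h N
    obtain ⟨s, hs, K, hK⟩ := h N
    exact ⟨s, ⟨s, hs, 1, S.one_mem, (mul_one s).symm⟩, K, hK⟩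
  · intro h N
    obtain ⟨r, ⟨s₁, hs₁, s₂, hs₂, heq⟩, K, hKN, hFG, hr⟩ := h N
    refine ⟨s₁, hs₁, K, hKN, hFG, fun x hx => ?_⟩
    have : s₁ • x = r • (s₂ • x) := by rw [heq, mul_smul]
    rw [this]
    exact hr _ (N.smul_mem _ hx)
end

section
/- Let R be a commutative ring, S a multiplicative subset, and 0 → A → B → C → 0 an exact sequence of R-modules. Then B is S-Noetherian if and only if both A and C are S-Noetherian. -/
/-- `M` is `S`-Noetherian. -/
def IsSNoetherian (R : Type*) [CommRing R] (S : Submonoid R)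
    (M : Type*) [AddCommGroup M] [Module R M] : Prop :=
  ∀ N : Submodule R M, ∃ s ∈ S, ∃ K : Submodule R M, K ≤ N ∧ K.FG ∧ ∀ x ∈ N, s • x ∈ K

theorem stmt6 {R A B C : Type*} [CommRing R]
    [AddCommGroup A] [Module R A] [AddCommGroup B] [Module R B]
    [AddCommGroup C] [Module R C] (S : Submonoid R)
    (f : A →ₗ[R] B) (g : B →ₗ[R] C)
    (hf : Function.Injective f) (hg : Function.Surjective g)
    (hfg : Function.Exact f g) :
    IsSNoetherian R S B ↔ (IsSNoetherian R S A ∧ IsSNoetherian R S C) := by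
  constructor
  · intro hB
    constructor
    · intro N
      obtain ⟨s, hs, K, hKle, hKfg, hK⟩ := hB (N.map f)
      refine ⟨s, hs, K.comap f, ?_, ?_, ?_⟩
      · intro a ha
        obtain ⟨a', ha', heq⟩ := hKle ha
        rwa [hf heq] at ha'
      · apply Submodule.fg_of_fg_map_injective f hf
        have hK' : Submodule.map f (K.comap f) = K := by
          rw [Submodule.map_comap_eq]
          exact inf_eq_right.mpr (hKle.trans (LinearMap.map_le_range))
        rwa [hK']
      · intro a ha
        have : s • f a ∈ K := hK _ ⟨a, ha, rfl⟩
        simpa [Submodule.mem_comap, map_smul] using this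
    · intro N
      obtain ⟨s, hs, K, hKle, hKfg, hK⟩ := hB (N.comap g)
      refine ⟨s, hs, K.map g, ?_, hKfg.map g, ?_⟩
      · refine (Submodule.map_mono hKle).trans ?_
        rw [Submodule.map_comap_eq]
        exact inf_le_right
      · intro x hx
        obtain ⟨b, hb⟩ := hg x
        have hbN : b ∈ N.comap g := by simpa [Submodule.mem_comap, hb] using hx
        refine ⟨s • b, hK _ hbN, ?_⟩
        simp [map_smul, hb]
  · rintro ⟨hA, hC⟩ N
    obtain ⟨s₁, hs₁, K₁, hK₁le, hK₁fg, hK₁⟩ := hC (N.map g)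
    obtain ⟨s₂, hs₂, K₂, hK₂le, hK₂fg, hK₂⟩ := hA (N.comap f)
    obtain ⟨T, hT⟩ := hK₁fg
    have hlift : ∀ t : T, ∃ b ∈ N, g b = (t : C) := by
      intro t
      have ht : (t : C) ∈ N.map g := hK₁le (hT ▸ Submodule.subset_span t.2)
      obtain ⟨b, hb, hgb⟩ := ht
      exact ⟨b, hb, hgb⟩
    choose b hbN hgb using hlift
    have hspanle : Submodule.span R (Set.range b) ≤ N := by
      rw [Submodule.span_le]
      rintro _ ⟨t, rfl⟩
      exact hbN t
    have hmapfle : Submodule.map f K₂ ≤ N := by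
      refine (Submodule.map_mono hK₂le).trans ?_
      rw [Submodule.map_comap_eq]
      exact inf_le_right
    have hmap : Submodule.map g (Submodule.span R (Set.range b)) = K₁ := by
      rw [Submodule.map_span, ← Set.range_comp]
      have hrange : Set.range (g ∘ b) = (T : Set C) := by
        ext c
        simp only [Set.range_comp, Function.comp]
        constructor
        · rintro ⟨_, ⟨t, rfl⟩, rfl⟩
          rw [hgb t]; exact t.2
        · intro hc
          exact ⟨b ⟨c, hc⟩, ⟨⟨c, hc⟩, rfl⟩, hgb _⟩
      rw [hrange, hT]
    refine ⟨s₁ * s₂, S.mul_mem hs₁ hs₂,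
      Submodule.span R (Set.range b) ⊔ Submodule.map f K₂,
      sup_le hspanle hmapfle,
      Submodule.FG.sup (Submodule.fg_span (Set.finite_range b)) (hK₂fg.map f), ?_⟩
    intro x hx
    have h1 : s₁ • g x ∈ K₁ := hK₁ _ ⟨x, hx, rfl⟩
    rw [← hmap] at h1
    obtain ⟨p, hp, hgp⟩ := h1
    have hgy : g (s₁ • x - p) = 0 := by
      simp [map_sub, map_smul, hgp]
    obtain ⟨a, ha⟩ := (hfg _).mp hgy
    have hpN : p ∈ N := hspanle hp
    have haN : a ∈ N.comap f := by
      simp only [Submodule.mem_comap, ha]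
      exact sub_mem (N.smul_mem _ hx) hpN
    have h2 : s₂ • a ∈ K₂ := hK₂ _ haN
    have key : (s₁ * s₂) • x = f (s₂ • a) + s₂ • p := by
      rw [map_smul, ha, mul_comm, mul_smul, smul_sub]
      abel
    rw [key]
    exact Submodule.add_mem _
      (Submodule.mem_sup_right ⟨s₂ • a, h2, rfl⟩)
      (Submodule.mem_sup_left (Submodule.smul_mem _ _ hp))
end

section
/- Let R be a commutative ring, S a multiplicative subset, and 0 → A → B → C → 0 an exact sequence of R-modules. If A is uniformly S-Noetherian with respect to s₁ ∈ S and C is uniformly S-Noetherian with respect to s₂ ∈ S, then B is uniformly S-Noetherian with respect to s₁s₂. -/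
/-- `M` is uniformly `S`-Noetherian with respect to `s`. -/
def IsUSNoetherianWrt (R : Type*) [CommRing R] (s : R)
    (M : Type*) [AddCommGroup M] [Module R M] : Prop :=
  ∀ N : Submodule R M, ∃ K : Submodule R M, K ≤ N ∧ K.FG ∧ ∀ x ∈ N, s • x ∈ K

theorem stmt7 {R A B C : Type*} [CommRing R]
    [AddCommGroup A] [Module R A] [AddCommGroup B] [Module R B]
    [AddCommGroup C] [Module R C] (S : Submonoid R)
    (f : A →ₗ[R] B) (g : B →ₗ[R] C)
    (hf : Function.Injective f) (hg : Function.Surjective g)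
    (hfg : Function.Exact f g)
    (s₁ s₂ : R) (hs₁ : s₁ ∈ S) (hs₂ : s₂ ∈ S)
    (hA : IsUSNoetherianWrt R s₁ A) (hC : IsUSNoetherianWrt R s₂ C) :
    IsUSNoetherianWrt R (s₁ * s₂) B := by
  classical
  intro N
  obtain ⟨KA, hKAle, hKAfg, hKA⟩ := hA (N.comap f)
  obtain ⟨KC, hKCle, hKCfg, hKC⟩ := hC (N.map g)
  obtain ⟨T, hT⟩ := hKCfg
  have hlift : ∀ c ∈ (T : Set C), ∃ b, b ∈ N ∧ g b = c := by
    intro c hc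
    have hcN : c ∈ N.map g := hKCle (hT ▸ Submodule.subset_span hc)
    obtain ⟨b, hb, hgb⟩ := Submodule.mem_map.mp hcN
    exact ⟨b, hb, hgb⟩
  choose! lift hliftN hliftg using hlift
  set Tb : Finset B := T.image lift with hTb
  refine ⟨KA.map f ⊔ Submodule.span R (Tb : Set B), ?_, ?_, ?_⟩
  · refine sup_le ?_ ?_
    · exact Submodule.map_le_iff_le_comap.mpr hKAle
    · rw [Submodule.span_le]
      intro b hb
      simp only [hTb, Finset.coe_image, Set.mem_image] at hb
      obtain ⟨c, hc, rfl⟩ := hb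
      exact hliftN c hc
  · exact Submodule.FG.sup (hKAfg.map f) ⟨Tb, rfl⟩
  · intro x hx
    have hgx : s₂ • g x ∈ KC := hKC (g x) (Submodule.mem_map_of_mem hx)
    -- s₂ • g x ∈ map g (span Tb)
    have hmem : s₂ • g x ∈ (Submodule.span R (Tb : Set B)).map g := by
      have hT' : (T : Set C) ⊆ g '' (Tb : Set B) := by
        intro c hc
        exact ⟨lift c, Finset.mem_coe.mpr (Finset.mem_image_of_mem lift hc), hliftg c hc⟩
      have : KC ≤ Submodule.span R (g '' (Tb : Set B)) := by
        rw [← hT]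
        exact Submodule.span_mono hT'
      have := this hgx
      rwa [← Submodule.map_span] at this
    obtain ⟨y, hy, hgy⟩ := Submodule.mem_map.mp hmem
    have hyN : y ∈ N := by
      have : Submodule.span R (Tb : Set B) ≤ N := by
        rw [Submodule.span_le]
        intro b hb
        simp only [hTb, Finset.coe_image, Set.mem_image] at hb
        obtain ⟨c, hc, rfl⟩ := hb
        exact hliftN c hc
      exact this hy
    have hker : g (s₂ • x - y) = 0 := by
      rw [map_sub, map_smul, hgy, sub_self]
    obtain ⟨a, ha⟩ := (hfg (s₂ • x - y)).mp hker
    have haN : a ∈ N.comap f := by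
      rw [Submodule.mem_comap, ha]
      exact Submodule.sub_mem N (Submodule.smul_mem N s₂ hx) hyN
    have hsa : s₁ • a ∈ KA := hKA a haN
    have h1 : f (s₁ • a) ∈ KA.map f := Submodule.mem_map_of_mem hsa
    have h2 : s₁ • y ∈ Submodule.span R (Tb : Set B) := Submodule.smul_mem _ s₁ hy
    have key : (s₁ * s₂) • x = f (s₁ • a) + s₁ • y := by
      rw [map_smul, ha, smul_sub, mul_smul]
      abel
    rw [key]
    exact Submodule.add_mem _ (Submodule.mem_sup_left h1) (Submodule.mem_sup_right h2)
end

section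
/- Let R be a commutative ring, S a multiplicative subset consisting of non-zero-divisors, and M a uniformly S-Noetherian R-module with respect to s ∈ S. Then the localization M_s of M at the powers of s is a Noetherian module over R_s. -/
theorem stmt9 {R M : Type*} [CommRing R] [AddCommGroup M] [Module R M]
    (S : Submonoid R) (hreg : (S : Set R) ⊆ nonZeroDivisors R)
    (s : R) (hs : s ∈ S)
    (h : ∀ N : Submodule R M, ∃ K : Submodule R M, K ≤ N ∧ K.FG ∧ ∀ x ∈ N, s • x ∈ K) :
    IsNoetherian (Localization (Submonoid.powers s))
      (LocalizedModule (Submonoid.powers s) M) := by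
  classical
  rw [isNoetherian_def]
  intro N'
  obtain ⟨K, hKN, ⟨T, hT⟩, hsK⟩ :=
    h ((N'.restrictScalars R).comap (LocalizedModule.mkLinearMap (Submonoid.powers s) M))
  refine ⟨T.image (LocalizedModule.mkLinearMap (Submonoid.powers s) M), le_antisymm ?_ ?_⟩
  · rw [Submodule.span_le]
    intro x hx
    simp only [Finset.coe_image, Set.mem_image, Finset.mem_coe] at hx
    obtain ⟨t, ht, rfl⟩ := hx
    exact hKN (hT ▸ Submodule.subset_span ht)
  · intro x hx
    revert hx
    induction x using LocalizedModule.induction_on with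
    | h m t =>
      intro hx
      have hm : m ∈ (N'.restrictScalars R).comap
          (LocalizedModule.mkLinearMap (Submonoid.powers s) M) := by
        have h1 : LocalizedModule.mkLinearMap (Submonoid.powers s) M m =
            algebraMap R (Localization (Submonoid.powers s)) (t : R) •
              LocalizedModule.mk m t := by
          rw [← Localization.mk_one_eq_algebraMap, LocalizedModule.mk_smul_mk]
          show LocalizedModule.mk m 1 = LocalizedModule.mk ((t : R) • m) (1 * t)
          rw [one_mul, ← Submonoid.smul_def, LocalizedModule.mk_cancel]
        simp only [Submodule.mem_comap, Submodule.restrictScalars_mem, h1]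
        exact Submodule.smul_mem _ _ hx
      have hsm : s • m ∈ K := hsK m hm
      have hspan : LocalizedModule.mkLinearMap (Submonoid.powers s) M (s • m) ∈
          Submodule.span (Localization (Submonoid.powers s))
            ((T.image (LocalizedModule.mkLinearMap (Submonoid.powers s) M) : Finset _) : Set _) := by
        have hle : K ≤ ((Submodule.span (Localization (Submonoid.powers s))
            ((T.image (LocalizedModule.mkLinearMap (Submonoid.powers s) M) : Finset _) :
              Set _)).restrictScalars R).comap
            (LocalizedModule.mkLinearMap (Submonoid.powers s) M) := by
          rw [← hT, Submodule.span_le]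
          intro a ha
          exact Submodule.subset_span
            (Finset.mem_coe.mpr (Finset.mem_image_of_mem _ ha))
        exact hle hsm
      have key : LocalizedModule.mk m t =
          Localization.mk (1 : R) (⟨s, Submonoid.mem_powers s⟩ * t) •
            LocalizedModule.mkLinearMap (Submonoid.powers s) M (s • m) := by
        show LocalizedModule.mk m t = _ • LocalizedModule.mk (s • m) 1
        rw [LocalizedModule.mk_smul_mk, mul_one, one_smul]
        have hrw : s • m = (⟨s, Submonoid.mem_powers s⟩ : Submonoid.powers s) • m := rfl
        rw [hrw, LocalizedModule.mk_cancel_common_left]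
      rw [key]
      exact Submodule.smul_mem _ _ hspan
end

section
/- Let R be a commutative ring, S a multiplicative subset, s ∈ S, and M an R-module. Then M is uniformly S-Noetherian with respect to s if and only if every ascending chain M₁ ⊆ M₂ ⊆ ⋯ of submodules of M is stationary with respect to s, i.e., there exists k such that s•Mₙ ⊆ M_k for all n ≥ k. -/
theorem stmt10 {R M : Type*} [CommRing R] [AddCommGroup M] [Module R M]
    (S : Submonoid R) (s : R) (hs : s ∈ S) :
    (∀ N : Submodule R M, ∃ K : Submodule R M, K ≤ N ∧ K.FG ∧ ∀ x ∈ N, s • x ∈ K) ↔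
    (∀ Mseq : ℕ → Submodule R M, Monotone Mseq →
      ∃ k : ℕ, ∀ n ≥ k, ∀ x ∈ Mseq n, s • x ∈ Mseq k) := by
  constructor
  · intro h Mseq hmono
    obtain ⟨K, hKle, hKfg, hK⟩ := h (⨆ n, Mseq n)
    have hc := (Submodule.fg_iff_compact K).mp hKfg
    rw [CompleteLattice.isCompactElement_iff_le_of_directed_sSup_le] at hc
    obtain ⟨N', hN', hle⟩ := hc (Set.range Mseq) (Set.range_nonempty _)
      (hmono.directed_le.directedOn_range) (by rw [sSup_range]; exact hKle)
    obtain ⟨k, rfl⟩ := hN'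
    refine ⟨k, fun n hn x hx => hle (hK x (Submodule.mem_iSup_of_mem n hx))⟩
  · intro h N
    by_contra hcon
    push_neg at hcon
    choose x hxN hxK using hcon
    let g : {K : Submodule R M // K ≤ N ∧ K.FG} → {K : Submodule R M // K ≤ N ∧ K.FG} :=
      fun K => ⟨K.1 ⊔ Submodule.span R {x K.1 K.2.1 K.2.2},
        sup_le K.2.1 ((Submodule.span_singleton_le_iff_mem _ _).mpr (hxN K.1 K.2.1 K.2.2)),
        K.2.2.sup (Submodule.fg_span_singleton _)⟩
    let seq : ℕ → {K : Submodule R M // K ≤ N ∧ K.FG} :=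
      fun n => g^[n] ⟨⊥, bot_le, Submodule.fg_bot⟩
    have hstep : ∀ n, (seq n).1 ≤ (seq (n + 1)).1 := by
      intro n
      have : seq (n + 1) = g (seq n) := Function.iterate_succ_apply' g n _
      rw [this]
      exact le_sup_left
    have hmono : Monotone fun n => (seq n).1 := monotone_nat_of_le_succ hstep
    obtain ⟨k, hk⟩ := h (fun n => (seq n).1) hmono
    have hxmem : x (seq k).1 (seq k).2.1 (seq k).2.2 ∈ (seq (k + 1)).1 := by
      have : seq (k + 1) = g (seq k) := Function.iterate_succ_apply' g k _
      rw [this]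
      exact Submodule.mem_sup_right (Submodule.mem_span_singleton_self _)
    exact hxK (seq k).1 (seq k).2.1 (seq k).2.2 (hk (k + 1) (Nat.le_succ k) _ hxmem)
end

section
/- Let R be a commutative ring, S a multiplicative subset, s ∈ S, and M an R-module. Suppose every nonempty family Γ of submodules of M has an element A that is maximal with respect to s, in the sense that there exists A ∈ Γ such that for all B ∈ Γ, if A ⊆ B then s•B ⊆ A. Then M is uniformly S-Noetherian with respect to s. -/
theorem stmt11 {R M : Type*} [CommRing R] [AddCommGroup M] [Module R M]
    (S : Submonoid R) (s : R) (hs : s ∈ S)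
    (hmax : ∀ Γ : Set (Submodule R M), Γ.Nonempty →
      ∃ A ∈ Γ, ∀ B ∈ Γ, A ≤ B → ∀ x ∈ B, s • x ∈ A) :
    ∀ N : Submodule R M, ∃ K : Submodule R M, K ≤ N ∧ K.FG ∧ ∀ x ∈ N, s • x ∈ K := by
  intro N
  obtain ⟨A, ⟨hAfg, hAN⟩, hA⟩ := hmax {K | K.FG ∧ K ≤ N} ⟨⊥, Submodule.fg_bot, bot_le⟩
  refine ⟨A, hAN, hAfg, fun x hx => ?_⟩
  have hB : (A ⊔ Submodule.span R {x}) ∈ {K : Submodule R M | K.FG ∧ K ≤ N} :=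
    ⟨hAfg.sup (Submodule.fg_span_singleton x),
     sup_le hAN ((Submodule.span_singleton_le_iff_mem x N).mpr hx)⟩
  exact hA _ hB le_sup_left x (le_sup_right (α := Submodule R M) (Submodule.mem_span_singleton_self x))
end

section
/- Let R₁, R₂ be commutative rings, Sᵢ ⊆ Rᵢ multiplicative subsets, and Mᵢ an Rᵢ-module (i = 1, 2). Set R = R₁ × R₂, S = S₁ × S₂, and M = M₁ × M₂. Then M is an S-Noetherian R-module if and only if M₁ is S₁-Noetherian over R₁ and M₂ is S₂-Noetherian over R₂. -/
section
variable (R₁ R₂ M₁ M₂ : Type*) [CommRing R₁] [CommRing R₂]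
  [AddCommGroup M₁] [Module R₁ M₁] [AddCommGroup M₂] [Module R₂ M₂]

/-- `M₁` as a module over `R₁ × R₂` via the first projection. -/
noncomputable instance : Module (R₁ × R₂) M₁ :=
  Module.compHom M₁ (RingHom.fst R₁ R₂)

/-- `M₂` as a module over `R₁ × R₂` via the second projection. -/
noncomputable instance : Module (R₁ × R₂) M₂ :=
  Module.compHom M₂ (RingHom.snd R₁ R₂)

namespace SNoethAux

variable {R₁ R₂ M₁ M₂}

/-- First projection as an `R₁ × R₂`-linear map. -/
def pi1 : (M₁ × M₂) →ₗ[R₁ × R₂] M₁ where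
  toFun p := p.1
  map_add' _ _ := rfl
  map_smul' _ _ := rfl

/-- Second projection as an `R₁ × R₂`-linear map. -/
def pi2 : (M₁ × M₂) →ₗ[R₁ × R₂] M₂ where
  toFun p := p.2
  map_add' _ _ := rfl
  map_smul' _ _ := rfl

/-- First inclusion as an `R₁ × R₂`-linear map. -/
def iota1 : M₁ →ₗ[R₁ × R₂] (M₁ × M₂) where
  toFun x := (x, 0)
  map_add' x y := by ext <;> simp
  map_smul' r x := by ext <;> simp [show r • (x,(0:M₂)) = (r.1 • x, r.2 • (0:M₂)) from rfl,
    show r • x = r.1 • x from rfl]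

/-- Second inclusion as an `R₁ × R₂`-linear map. -/
def iota2 : M₂ →ₗ[R₁ × R₂] (M₁ × M₂) where
  toFun y := (0, y)
  map_add' x y := by ext <;> simp
  map_smul' r y := by ext <;> simp [show r • ((0:M₁),y) = (r.1 • (0:M₁), r.2 • y) from rfl,
    show r • y = r.2 • y from rfl]

lemma mem_span_fst (T : Set M₁) (x : M₁) :
    x ∈ Submodule.span (R₁ × R₂) T ↔ x ∈ Submodule.span R₁ T := by
  constructor
  · intro h
    refine Submodule.span_induction (fun y hy => Submodule.subset_span hy)
      (Submodule.zero_mem _) (fun a b _ _ ha hb => Submodule.add_mem _ ha hb) ?_ h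
    intro r a _ ha
    exact (Submodule.span R₁ T).smul_mem r.1 ha
  · intro h
    refine Submodule.span_induction (fun y hy => Submodule.subset_span hy)
      (Submodule.zero_mem _) (fun a b _ _ ha hb => Submodule.add_mem _ ha hb) ?_ h
    intro r a _ ha
    exact (Submodule.span (R₁ × R₂) T).smul_mem (r, 0) ha

lemma mem_span_snd (T : Set M₂) (x : M₂) :
    x ∈ Submodule.span (R₁ × R₂) T ↔ x ∈ Submodule.span R₂ T := by
  constructor
  · intro h
    refine Submodule.span_induction (fun y hy => Submodule.subset_span hy)
      (Submodule.zero_mem _) (fun a b _ _ ha hb => Submodule.add_mem _ ha hb) ?_ h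
    intro r a _ ha
    exact (Submodule.span R₂ T).smul_mem r.2 ha
  · intro h
    refine Submodule.span_induction (fun y hy => Submodule.subset_span hy)
      (Submodule.zero_mem _) (fun a b _ _ ha hb => Submodule.add_mem _ ha hb) ?_ h
    intro r a _ ha
    exact (Submodule.span (R₁ × R₂) T).smul_mem ((0 : R₁), r) ha

/-- Reinterpret an `R₁ × R₂`-submodule of `M₁` as an `R₁`-submodule. -/
def toFst (P : Submodule (R₁ × R₂) M₁) : Submodule R₁ M₁ where
  carrier := P
  zero_mem' := P.zero_mem
  add_mem' := P.add_mem
  smul_mem' r x hx := P.smul_mem (r, 0) hx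

/-- Reinterpret an `R₁`-submodule of `M₁` as an `R₁ × R₂`-submodule. -/
def ofFst (P : Submodule R₁ M₁) : Submodule (R₁ × R₂) M₁ where
  carrier := P
  zero_mem' := P.zero_mem
  add_mem' := P.add_mem
  smul_mem' r x hx := P.smul_mem r.1 hx

/-- Reinterpret an `R₁ × R₂`-submodule of `M₂` as an `R₂`-submodule. -/
def toSnd (P : Submodule (R₁ × R₂) M₂) : Submodule R₂ M₂ where
  carrier := P
  zero_mem' := P.zero_mem
  add_mem' := P.add_mem
  smul_mem' r x hx := P.smul_mem ((0 : R₁), r) hx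

/-- Reinterpret an `R₂`-submodule of `M₂` as an `R₁ × R₂`-submodule. -/
def ofSnd (P : Submodule R₂ M₂) : Submodule (R₁ × R₂) M₂ where
  carrier := P
  zero_mem' := P.zero_mem
  add_mem' := P.add_mem
  smul_mem' r x hx := P.smul_mem r.2 hx

lemma toFst_fg {P : Submodule (R₁ × R₂) M₁} (h : P.FG) : (toFst P).FG := by
  obtain ⟨T, hT⟩ := h
  refine ⟨T, le_antisymm ?_ ?_⟩
  · rw [Submodule.span_le]
    intro x hx
    have : x ∈ Submodule.span (R₁ × R₂) (T : Set M₁) := Submodule.subset_span hx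
    rw [hT] at this; exact this
  · intro x hx
    have : x ∈ Submodule.span (R₁ × R₂) (T : Set M₁) := by rw [hT]; exact hx
    exact (mem_span_fst _ x).mp this

lemma ofFst_fg {P : Submodule R₁ M₁} (h : P.FG) : (ofFst (R₂ := R₂) P).FG := by
  obtain ⟨T, hT⟩ := h
  refine ⟨T, SetLike.ext fun x => (mem_span_fst (R₂ := R₂) T x).trans ?_⟩
  rw [hT]
  exact Iff.rfl

lemma ofSnd_fg {P : Submodule R₂ M₂} (h : P.FG) : (ofSnd (R₁ := R₁) P).FG := by
  obtain ⟨T, hT⟩ := h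
  refine ⟨T, SetLike.ext fun x => (mem_span_snd (R₁ := R₁) T x).trans ?_⟩
  rw [hT]
  exact Iff.rfl

lemma toSnd_fg {P : Submodule (R₁ × R₂) M₂} (h : P.FG) : (toSnd P).FG := by
  obtain ⟨T, hT⟩ := h
  refine ⟨T, le_antisymm ?_ ?_⟩
  · rw [Submodule.span_le]
    intro x hx
    have : x ∈ Submodule.span (R₁ × R₂) (T : Set M₂) := Submodule.subset_span hx
    rw [hT] at this; exact this
  · intro x hx
    have : x ∈ Submodule.span (R₁ × R₂) (T : Set M₂) := by rw [hT]; exact hx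
    exact (mem_span_snd _ x).mp this

end SNoethAux

open SNoethAux

theorem stmt12 (S₁ : Submonoid R₁) (S₂ : Submonoid R₂) :
    IsSNoetherian (R₁ × R₂) (S₁.prod S₂) (M₁ × M₂) ↔
      (IsSNoetherian R₁ S₁ M₁ ∧ IsSNoetherian R₂ S₂ M₂) := by
  constructor
  · intro h
    constructor
    · -- M₁ is S₁-Noetherian
      intro N₁
      obtain ⟨s, hs, K, hKN, hKfg, hsK⟩ := h ((ofFst (R₂ := R₂) N₁).comap (pi1 (M₂ := M₂)))
      rw [Submonoid.mem_prod] at hs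
      refine ⟨s.1, hs.1, toFst (K.map pi1), ?_, toFst_fg (hKfg.map pi1), ?_⟩
      · rintro x hx
        obtain ⟨p, hp, rfl⟩ := hx
        exact hKN hp
      · intro x hx
        have hmem : ((x, 0) : M₁ × M₂) ∈ (ofFst (R₂ := R₂) N₁).comap (pi1 (M₂ := M₂)) := hx
        have := hsK _ hmem
        refine ⟨s • ((x, 0) : M₁ × M₂), this, ?_⟩
        show s.1 • x = s.1 • x
        rfl
    · -- M₂ is S₂-Noetherian
      intro N₂
      obtain ⟨s, hs, K, hKN, hKfg, hsK⟩ := h ((ofSnd (R₁ := R₁) N₂).comap (pi2 (M₁ := M₁)))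
      rw [Submonoid.mem_prod] at hs
      refine ⟨s.2, hs.2, toSnd (K.map pi2), ?_, toSnd_fg (hKfg.map pi2), ?_⟩
      · rintro x hx
        obtain ⟨p, hp, rfl⟩ := hx
        exact hKN hp
      · intro x hx
        have hmem : ((0, x) : M₁ × M₂) ∈ (ofSnd (R₁ := R₁) N₂).comap (pi2 (M₁ := M₁)) := hx
        have := hsK _ hmem
        exact ⟨s • ((0, x) : M₁ × M₂), this, rfl⟩
  · rintro ⟨h₁, h₂⟩
    intro N
    obtain ⟨s₁, hs₁, K₁, hK₁N, hK₁fg, hsK₁⟩ := h₁ (toFst (R₂ := R₂) (N.map pi1))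
    obtain ⟨s₂, hs₂, K₂, hK₂N, hK₂fg, hsK₂⟩ := h₂ (toSnd (R₁ := R₁) (N.map pi2))
    refine ⟨(s₁, s₂), Submonoid.mem_prod.mpr ⟨hs₁, hs₂⟩,
      (ofFst (R₂ := R₂) K₁).map iota1 ⊔ (ofSnd (R₁ := R₁) K₂).map iota2, ?_, ?_, ?_⟩
    · refine sup_le ?_ ?_
      · rintro p ⟨x, hx, rfl⟩
        obtain ⟨q, hq, rfl⟩ := hK₁N hx
        have : ((1 : R₁), (0 : R₂)) • q ∈ N := N.smul_mem _ hq
        have heq : ((1 : R₁), (0 : R₂)) • q = ((q.1 : M₁), (0 : M₂)) := by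
          show ((1 : R₁) • q.1, (0 : R₂) • q.2) = (q.1, 0)
          simp
        rwa [heq] at this
      · rintro p ⟨y, hy, rfl⟩
        obtain ⟨q, hq, rfl⟩ := hK₂N hy
        have : ((0 : R₁), (1 : R₂)) • q ∈ N := N.smul_mem _ hq
        have heq : ((0 : R₁), (1 : R₂)) • q = ((0 : M₁), (q.2 : M₂)) := by
          show ((0 : R₁) • q.1, (1 : R₂) • q.2) = (0, q.2)
          simp
        rwa [heq] at this
    · exact Submodule.FG.sup (Submodule.FG.map _ (ofFst_fg hK₁fg))
        (Submodule.FG.map _ (ofSnd_fg hK₂fg))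
    · intro p hp
      have h1 : s₁ • p.1 ∈ K₁ := hsK₁ p.1 ⟨p, hp, rfl⟩
      have h2 : s₂ • p.2 ∈ K₂ := hsK₂ p.2 ⟨p, hp, rfl⟩
      have heq : ((s₁, s₂) : R₁ × R₂) • p = iota1 (R₁ := R₁) (R₂ := R₂) (s₁ • p.1) + iota2 (R₁ := R₁) (R₂ := R₂) (s₂ • p.2) := by
        show (s₁ • p.1, s₂ • p.2) = ((s₁ • p.1, 0) + (0, s₂ • p.2) : M₁ × M₂)
        simp
      rw [heq]
      exact Submodule.add_mem _
        (Submodule.mem_sup_left ⟨s₁ • p.1, h1, rfl⟩)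
        (Submodule.mem_sup_right ⟨s₂ • p.2, h2, rfl⟩)

end
end

section
/- Let R be a commutative ring and M an R-module. Suppose that for every maximal ideal m of R, M is (R ∖ m)-Noetherian (i.e., every submodule N of M admits s ∉ m and a finitely generated K ⊆ N with s•N ⊆ K). Then M is a Noetherian R-module. -/
theorem stmt13 {R M : Type*} [CommRing R] [AddCommGroup M] [Module R M]
    (h : ∀ m : Ideal R, m.IsMaximal →
      ∀ N : Submodule R M, ∃ s ∉ m, ∃ K : Submodule R M, K ≤ N ∧ K.FG ∧ ∀ x ∈ N, s • x ∈ K) :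
    IsNoetherian R M := by
  rw [isNoetherian_def]
  intro N
  set I : Ideal R :=
    { carrier := {r | ∃ K : Submodule R M, K ≤ N ∧ K.FG ∧ ∀ x ∈ N, r • x ∈ K}
      add_mem' := by
        rintro a b ⟨K, hK, hKfg, hKa⟩ ⟨K', hK', hK'fg, hK'b⟩
        exact ⟨K ⊔ K', sup_le hK hK', hKfg.sup hK'fg, fun x hx => by
          rw [add_smul]
          exact add_mem (le_sup_left (a := K) (b := K') (hKa x hx))
            (le_sup_right (a := K) (b := K') (hK'b x hx))⟩
      zero_mem' := ⟨⊥, bot_le, Submodule.fg_bot, fun x _ => by simp⟩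
      smul_mem' := by
        rintro c r ⟨K, hK, hKfg, hKr⟩
        exact ⟨K, hK, hKfg, fun x hx => by
          rw [smul_eq_mul, mul_smul]; exact K.smul_mem c (hKr x hx)⟩ } with hI
  have hItop : I = ⊤ := by
    by_contra hne
    obtain ⟨m, hm, hIm⟩ := Ideal.exists_le_maximal I hne
    obtain ⟨s, hs, K, hK, hKfg, hsK⟩ := h m hm N
    exact hs (hIm ⟨K, hK, hKfg, hsK⟩)
  have h1 : (1 : R) ∈ I := hItop ▸ Submodule.mem_top
  obtain ⟨K, hK, hKfg, hK1⟩ := h1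
  have : N = K := le_antisymm (fun x hx => by simpa using hK1 x hx) hK
  rw [this]; exact hKfg
end

section
/- Let R be a commutative ring, S a multiplicative subset, and f : M → N an R-module homomorphism that is a u-S-isomorphism, i.e., there exist s ∈ S and an R-homomorphism g : N → M with g ∘ f = s•id_M and f ∘ g = s•id_N. If M is S-Noetherian, then N is S-Noetherian. -/
theorem stmt16 {R M N : Type*} [CommRing R] [AddCommGroup M] [Module R M]
    [AddCommGroup N] [Module R N] (S : Submonoid R) (f : M →ₗ[R] N)
    (huS : ∃ s ∈ S, ∃ g : N →ₗ[R] M,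
      g.comp f = s • LinearMap.id ∧ f.comp g = s • LinearMap.id)
    (hM : ∀ P : Submodule R M,
      ∃ t ∈ S, ∃ K : Submodule R M, K ≤ P ∧ K.FG ∧ ∀ x ∈ P, t • x ∈ K) :
    ∀ P : Submodule R N,
      ∃ t ∈ S, ∃ K : Submodule R N, K ≤ P ∧ K.FG ∧ ∀ x ∈ P, t • x ∈ K := by
  obtain ⟨s, hs, g, hgf, hfg⟩ := huS
  intro P
  obtain ⟨t, ht, K, hKle, hKfg, hKt⟩ := hM (P.comap f)
  refine ⟨t * s, S.mul_mem ht hs, K.map f, ?_, hKfg.map f, ?_⟩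
  · intro y hy
    obtain ⟨x, hx, rfl⟩ := hy
    exact hKle hx
  · intro x hx
    have hgx : g x ∈ P.comap f := by
      have : f (g x) = s • x := by
        have := LinearMap.congr_fun hfg x
        simpa using this
      simp [Submodule.mem_comap, this, P.smul_mem s hx]
    have h1 : t • g x ∈ K := hKt _ hgx
    refine ⟨t • g x, h1, ?_⟩
    have : f (g x) = s • x := by
      have := LinearMap.congr_fun hfg x
      simpa using this
    rw [map_smul, this, smul_smul, mul_smul]
end
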